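/- Let S ⊆ R be a rationally closed subring (i.e., U(R) ∩ S = U(S)). Then √Δ(R) ∩ S ⊆ √Δ(S). -/

import Mathlib

/-- Δ(R) = {x : 1 + x*u is a unit for every unit u}. -/
def Delta (R : Type*) [Ring R] : Set R :=
  {x | ∀ u : R, IsUnit u → IsUnit (1 + x * u)}

/-- √Δ(R) = {x : x^n ∈ Δ(R) for some n ≥ 1}. -/
def sqrtDelta (R : Type*) [Ring R] : Set R :=
  {x | ∃ n : ℕ, 1 ≤ n ∧ x ^ n ∈ Delta R}

theorem preimage_Delta_subset {A R : Type*} [Ring A] [Ring R] (f : A →+* R) [IsLocalHom f] :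
    f ⁻¹' Delta R ⊆ Delta A := by
  intro x hx u hu
  apply isUnit_of_map_unit f
  simpa using hx (f u) (hu.map f)

theorem preimage_sqrtDelta_subset {A R : Type*} [Ring A] [Ring R] (f : A →+* R) [IsLocalHom f] :
    f ⁻¹' sqrtDelta R ⊆ sqrtDelta A := by
  rintro x ⟨n, hn, hxn⟩
  exact ⟨n, hn, preimage_Delta_subset f (by simpa using hxn)⟩

theorem stmt_19 {R : Type*} [Ring R] (S : Subring R)
    (hrc : ∀ x : S, IsUnit (x : R) ↔ IsUnit x) :
    ∀ x : S, (x : R) ∈ sqrtDelta R → x ∈ sqrtDelta S := by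
  -- rational closedness says exactly that the inclusion `S → R` reflects units
  have : IsLocalHom S.subtype := ⟨fun x => (hrc x).mp⟩
  exact fun x hx => preimage_sqrtDelta_subset S.subtype hx
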